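/- If M is a closed PCF_dp program and M is contextually congruent to a value V, then M evaluates to some value W (M ⇓ W) with V contextually congruent to W. -/

import Mathlib

/-!  A formalization of the meta-programming language PCF_dp (Davies–Pfenning style
quasi-quotation over call-by-value PCF), with small-step reduction, typing with a
modal context, contexts, contextual (pre)congruence, models, and a shallow
semantics for the program logic's formulae and judgements. -/

namespace PCFdp

/-- Types of PCF_dp: base types, functions, and code types `⟨α⟩`. -/
inductive Ty : Type
  | unit | bool | int
  | arrow (a b : Ty)
  | code (a : Ty)
deriving DecidableEq

/-- Terms of PCF_dp. `quote M` is the quasi-quote `⟨M⟩`, and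
`letq x M N` is `let ⟨x⟩ = M in N`. `fix g x α β M` is `μg.λx^α.M`. -/
inductive Tm : Type
  | var (x : ℕ)
  | cunit
  | cbool (b : Bool)
  | cint (n : ℤ)
  | lam (x : ℕ) (α : Ty) (M : Tm)
  | fix (g x : ℕ) (α β : Ty) (M : Tm)
  | app (M N : Tm)
  | add (M N : Tm)
  | ifte (M N N' : Tm)
  | quote (M : Tm)
  | letq (x : ℕ) (M N : Tm)
deriving DecidableEq

/-- Values: constants, abstractions, recursive abstractions, and all quasi-quotes. -/
inductive IsValue : Tm → Prop
  | cunit : IsValue .cunit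
  | cbool (b) : IsValue (.cbool b)
  | cint (n) : IsValue (.cint n)
  | lam (x α M) : IsValue (.lam x α M)
  | fix (g x α β M) : IsValue (.fix g x α β M)
  | quote (M) : IsValue (.quote M)

/-- Substitution `M[N/x]` (substituted terms are closed in all uses below). -/
def subst (x : ℕ) (N : Tm) : Tm → Tm
  | .var y => if y = x then N else .var y
  | .cunit => .cunit
  | .cbool b => .cbool b
  | .cint n => .cint n
  | .lam y α M => if y = x then .lam y α M else .lam y α (subst x N M)
  | .fix g y α β M => if g = x ∨ y = x then .fix g y α β M else .fix g y α β (subst x N M)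
  | .app M M' => .app (subst x N M) (subst x N M')
  | .add M M' => .add (subst x N M) (subst x N M')
  | .ifte M M₁ M₂ => .ifte (subst x N M) (subst x N M₁) (subst x N M₂)
  | .quote M => .quote (subst x N M)
  | .letq y M M' => .letq y (subst x N M) (if y = x then M' else subst x N M')

/-- Call-by-value small-step reduction, with the redexes of PCF plus
`let ⟨x⟩ = ⟨M⟩ in N → N[M/x]`, closed under evaluation contexts. -/
inductive Step : Tm → Tm → Prop
  | beta {x α M V} : IsValue V → Step (.app (.lam x α M) V) (subst x V M)
  | betaFix {g x α β M V} : IsValue V →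
      Step (.app (.fix g x α β M) V) (subst x V (subst g (.fix g x α β M) M))
  | iteT {N N'} : Step (.ifte (.cbool true) N N') N
  | iteF {N N'} : Step (.ifte (.cbool false) N N') N'
  | addC {m n} : Step (.add (.cint m) (.cint n)) (.cint (m + n))
  | letqQ {x M N} : Step (.letq x (.quote M) N) (subst x M N)
  | appL {M M' N} : Step M M' → Step (.app M N) (.app M' N)
  | appR {V N N'} : IsValue V → Step N N' → Step (.app V N) (.app V N')
  | addL {M M' N} : Step M M' → Step (.add M N) (.add M' N)
  | addR {V N N'} : IsValue V → Step N N' → Step (.add V N) (.add V N')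
  | ifteC {M M' N N'} : Step M M' → Step (.ifte M N N') (.ifte M' N N')
  | letqL {x M M' N} : Step M M' → Step (.letq x M N) (.letq x M' N)

/-- Many-step reduction `→*`. -/
def Steps : Tm → Tm → Prop := Relation.ReflTransGen Step

/-- `M ⇓ V`: evaluation to a value. -/
def Evals (M V : Tm) : Prop := Steps M V ∧ IsValue V

/-- `M ⇓`: convergence. -/
def Conv (M : Tm) : Prop := ∃ V, Evals M V

/-- `M ⇑`: divergence. -/
def Div (M : Tm) : Prop := ¬ Conv M

/-- Typing environments: partial maps from variables to types. -/
def Env : Type := ℕ → Option Ty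
def Env.empty : Env := fun _ => none
def Env.update (Γ : Env) (x : ℕ) (α : Ty) : Env := fun y => if y = x then some α else Γ y

/-- The typing judgement `Γ; Δ ⊢ M : α` with non-modal context `Γ` and modal
context `Δ`.  Free variables of quasi-quoted code must be modal; unquote binds
a modal variable. -/
inductive Types : Env → Env → Tm → Ty → Prop
  | varN {Γ Δ : Env} {x α} : Γ x = some α → Types Γ Δ (.var x) α
  | varM {Γ Δ : Env} {x α} : Δ x = some α → Types Γ Δ (.var x) α
  | cunit {Γ Δ} : Types Γ Δ .cunit .unit
  | cbool {Γ Δ b} : Types Γ Δ (.cbool b) .bool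
  | cint {Γ Δ n} : Types Γ Δ (.cint n) .int
  | lam {Γ Δ x α β M} : Types (Env.update Γ x α) Δ M β → Types Γ Δ (.lam x α M) (.arrow α β)
  | fix {Γ Δ g x α β M} :
      Types (Env.update (Env.update Γ g (.arrow α β)) x α) Δ M β →
      Types Γ Δ (.fix g x α β M) (.arrow α β)
  | app {Γ Δ M N α β} : Types Γ Δ M (.arrow α β) → Types Γ Δ N α → Types Γ Δ (.app M N) β
  | add {Γ Δ M N} : Types Γ Δ M .int → Types Γ Δ N .int → Types Γ Δ (.add M N) .int
  | ifte {Γ Δ M N N' α} : Types Γ Δ M .bool → Types Γ Δ N α → Types Γ Δ N' α →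
      Types Γ Δ (.ifte M N N') α
  | quote {Γ Δ M α} : Types Env.empty Δ M α → Types Γ Δ (.quote M) (.code α)
  | letq {Γ Δ x M N α β} : Types Γ Δ M (.code α) → Types Γ (Env.update Δ x α) N β →
      Types Γ Δ (.letq x M N) β

/-- `M` is a closed program of type `α`. -/
def Closed (M : Tm) (α : Ty) : Prop := Types Env.empty Env.empty M α

/-- Term contexts (terms with one hole). -/
inductive Ctx : Type
  | hole
  | lamC (x : ℕ) (α : Ty) (C : Ctx)
  | fixC (g x : ℕ) (α β : Ty) (C : Ctx)
  | appL (C : Ctx) (N : Tm)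
  | appR (M : Tm) (C : Ctx)
  | addL (C : Ctx) (N : Tm)
  | addR (M : Tm) (C : Ctx)
  | ifteC (C : Ctx) (N N' : Tm)
  | ifteL (M : Tm) (C : Ctx) (N' : Tm)
  | ifteR (M N : Tm) (C : Ctx)
  | quoteC (C : Ctx)
  | letqL (x : ℕ) (C : Ctx) (N : Tm)
  | letqR (x : ℕ) (M : Tm) (C : Ctx)

/-- Plugging a term into a context. -/
def Ctx.plug : Ctx → Tm → Tm
  | .hole, M => M
  | .lamC x α C, M => .lam x α (C.plug M)
  | .fixC g x α β C, M => .fix g x α β (C.plug M)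
  | .appL C N, M => .app (C.plug M) N
  | .appR L C, M => .app L (C.plug M)
  | .addL C N, M => .add (C.plug M) N
  | .addR L C, M => .add L (C.plug M)
  | .ifteC C N N', M => .ifte (C.plug M) N N'
  | .ifteL L C N', M => .ifte L (C.plug M) N'
  | .ifteR L N C, M => .ifte L N (C.plug M)
  | .quoteC C, M => .quote (C.plug M)
  | .letqL x C N, M => .letq x (C.plug M) N
  | .letqR x L C, M => .letq x L (C.plug M)

/-- Contextual precongruence `M ≲ N`: for every closing context `C` of type
`Unit` (for both terms), convergence of `C[M]` implies convergence of `C[N]`. -/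
def Prec (M N : Tm) : Prop :=
  ∀ C : Ctx, Closed (C.plug M) .unit → Closed (C.plug N) .unit →
    Conv (C.plug M) → Conv (C.plug N)

/-- Contextual congruence `M ≃ N`, i.e. `≲ ∩ ≲⁻¹`. -/
def Cong (M N : Tm) : Prop := Prec M N ∧ Prec N M

/-- Partial substitutions (used as the two components of a model). -/
def Sub : Type := ℕ → Option Tm
def Sub.remove (ρ : Sub) (x : ℕ) : Sub := fun y => if y = x then none else ρ y
def Sub.update (ρ : Sub) (x : ℕ) (M : Tm) : Sub := fun y => if y = x then some M else ρ y

/-- Simultaneous substitution of (closed) terms for free variables. -/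
def msubst (ρ : Sub) : Tm → Tm
  | .var x => (ρ x).getD (.var x)
  | .cunit => .cunit
  | .cbool b => .cbool b
  | .cint n => .cint n
  | .lam x α M => .lam x α (msubst (ρ.remove x) M)
  | .fix g x α β M => .fix g x α β (msubst ((ρ.remove g).remove x) M)
  | .app M N => .app (msubst ρ M) (msubst ρ N)
  | .add M N => .add (msubst ρ M) (msubst ρ N)
  | .ifte M N N' => .ifte (msubst ρ M) (msubst ρ N) (msubst ρ N')
  | .quote M => .quote (msubst ρ M)
  | .letq x M N => .letq x (msubst ρ M) (msubst (ρ.remove x) N)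

/-- A model of type `Γ; Δ`: `ξ` maps the non-modal variables to closed values of
the right types, `σ` maps the modal variables to closed (possibly diverging)
programs of the right types. -/
structure Model (Γ Δ : Env) : Type where
  ξ : Sub
  σ : Sub
  ξ_dom : ∀ x, (Γ x).isSome ↔ (ξ x).isSome
  ξ_typed : ∀ x α V, Γ x = some α → ξ x = some V → IsValue V ∧ Closed V α
  σ_dom : ∀ x, (Δ x).isSome ↔ (σ x).isSome
  σ_typed : ∀ x α M, Δ x = some α → σ x = some M → Closed M α

/-- The combined substitution `ξ ∪ σ` of a model. -/
def Model.sub {Γ Δ : Env} (η : Model Γ Δ) : Sub :=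
  fun x => match η.ξ x with | some V => some V | none => η.σ x

/-- The closure `Mη` of a term by a model. -/
def Model.close {Γ Δ : Env} (η : Model Γ Δ) (M : Tm) : Tm := msubst η.sub M

/-- Denotation of a variable in a model given as a pair of substitutions. -/
def lookup (ξ σ : Sub) (u : ℕ) : Option Tm :=
  match ξ u with | some V => some V | none => σ u

/-- Formulae of the logic, represented semantically by their satisfaction
predicate on models `(ξ, σ)`. -/
def Form : Type := Sub → Sub → Prop

/-- Semantics of the code-evaluation predicate `⟨u⟩↘m.A`: the denotation of `u`
evaluates to a quasi-quote `⟨M⟩`, `M ⇓ V`, and `A` holds with the modal anchor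
`m` bound to `V`. -/
def CodeEval (u m : ℕ) (A : Form) : Form := fun ξ σ =>
  ∃ U M V, lookup ξ σ u = some U ∧ Evals U (.quote M) ∧ Evals M V ∧ A ξ (σ.update m V)

/-- Validity of the total-correctness judgement `{A} M :_u {B}`
(anchor `u` non-modal). -/
def Valid (Γ Δ : Env) (A : Form) (M : Tm) (u : ℕ) (B : Form) : Prop :=
  ∀ η : Model Γ Δ, A η.ξ η.σ →
    ∃ V, Evals (η.close M) V ∧ B (η.ξ.update u V) η.σ

/-- Validity of a total-correctness judgement whose anchor is placed modally. -/
def ValidM (Γ Δ : Env) (A : Form) (M : Tm) (m : ℕ) (B : Form) : Prop :=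
  ∀ η : Model Γ Δ, A η.ξ η.σ →
    ∃ V, Evals (η.close M) V ∧ B η.ξ (η.σ.update m V)

/-!
Plugging `M` and `V` into `(λ_.()) [·]` shows that `M` converges, say to `W`. Reduction between
closed terms is contained in contextual equivalence: since reduction is deterministic, the
compatible closure of joinability under `→*` is a simulation, so it preserves convergence. What
remains is typing: a context closing `V` may give its hole a type `σ` other than `α`, so `M`
cannot be plugged in directly. The context `coerce σ α` retypes every closed term of type `α` at
`σ` without changing its value, so `M ≃ V` can be applied under it, and the reductions
`coerce σ α [M] →* W` and `coerce σ α [V] →* V` transfer the result to `V ≃ W`.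
-/

open Relation

def fv : Tm → Finset ℕ
  | .var x => {x}
  | .cunit => ∅
  | .cbool _ => ∅
  | .cint _ => ∅
  | .lam x _ M => fv M \ {x}
  | .fix g x _ _ M => fv M \ {g, x}
  | .app M N => fv M ∪ fv N
  | .add M N => fv M ∪ fv N
  | .ifte M N N' => fv M ∪ fv N ∪ fv N'
  | .quote M => fv M
  | .letq x M N => fv M ∪ (fv N \ {x})

theorem subst_eq_self_of_notMem {x : ℕ} {N M : Tm} (h : x ∉ fv M) : subst x N M = M := by
  induction M <;> simp only [fv, Finset.mem_union, Finset.mem_sdiff, Finset.mem_singleton,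
    Finset.mem_insert, not_or, not_and, not_not] at h <;> simp only [subst] <;> grind

theorem subst_eq_self_of_fv_eq_empty {x : ℕ} {N M : Tm} (h : fv M = ∅) : subst x N M = M :=
  subst_eq_self_of_notMem (by simp [h])

theorem fv_subst_subset (x : ℕ) (N M : Tm) : fv (subst x N M) ⊆ fv M \ {x} ∪ fv N := by
  induction M <;> simp only [subst, fv] <;> (try split_ifs) <;> intro y <;> simp [fv] <;> grind

theorem IsValue.not_step {V M : Tm} (hV : IsValue V) : ¬ Step V M := by
  rintro h; cases hV <;> cases h

theorem Step.deterministic {M N N' : Tm} (h : Step M N) (h' : Step M N') : N = N' := by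
  induction h generalizing N' <;> cases h' <;>
    first
    | rfl
    | grind [IsValue.not_step, IsValue]

theorem Steps.eq_of_isValue {V M : Tm} (hV : IsValue V) (h : Steps V M) : M = V := by
  rcases h.cases_head with rfl | ⟨_, h, -⟩
  · rfl
  · exact (hV.not_step h).elim

theorem eq_of_join_of_isValue {V W : Tm} (h : Join Steps V W) (hV : IsValue V) (hW : IsValue W) :
    V = W := by
  obtain ⟨U, hVU, hWU⟩ := h
  rw [← hVU.eq_of_isValue hV, hWU.eq_of_isValue hW]

theorem fv_subset_of_step {M N : Tm} (h : Step M N) : fv N ⊆ fv M := by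
  induction h with
  | beta | letqQ => exact (fv_subst_subset ..).trans (by simp [fv, Finset.union_comm])
  | betaFix =>
    refine (fv_subst_subset ..).trans (Finset.union_subset_union_left
      (Finset.sdiff_subset_sdiff (fv_subst_subset ..) subset_rfl) |>.trans ?_)
    intro y; simp [fv]; tauto
  | iteT | iteF | addC => simp [fv]
  | appL _ ih | addL _ ih | ifteC _ ih | letqL _ ih =>
    simp only [fv]; gcongr
  | appR _ _ ih | addR _ _ ih => exact Finset.union_subset_union subset_rfl ih

theorem fv_subset_of_steps {M N : Tm} (h : Steps M N) : fv N ⊆ fv M := by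
  induction h with
  | refl => rfl
  | tail _ hstep ih => exact ih.trans' (fv_subset_of_step hstep)

theorem fv_eq_empty_of_steps {M N : Tm} (hM : fv M = ∅) (h : Steps M N) : fv N = ∅ :=
  Finset.subset_empty.1 (hM ▸ fv_subset_of_steps h)

theorem Steps.appL {M M' N : Tm} (h : Steps M M') : Steps (.app M N) (.app M' N) :=
  ReflTransGen.lift (Tm.app · N) (fun _ _ => Step.appL) _ _ h

theorem Steps.appR {V N N' : Tm} (hV : IsValue V) (h : Steps N N') :
    Steps (.app V N) (.app V N') :=
  ReflTransGen.lift (Tm.app V) (fun _ _ => Step.appR hV) _ _ h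

theorem Steps.addL {M M' N : Tm} (h : Steps M M') : Steps (.add M N) (.add M' N) :=
  ReflTransGen.lift (Tm.add · N) (fun _ _ => Step.addL) _ _ h

theorem Steps.addR {V N N' : Tm} (hV : IsValue V) (h : Steps N N') :
    Steps (.add V N) (.add V N') :=
  ReflTransGen.lift (Tm.add V) (fun _ _ => Step.addR hV) _ _ h

theorem Steps.ifteC {M M' N N' : Tm} (h : Steps M M') : Steps (.ifte M N N') (.ifte M' N N') :=
  ReflTransGen.lift (Tm.ifte · N N') (fun _ _ => Step.ifteC) _ _ h

theorem Steps.letqL {x : ℕ} {M M' N : Tm} (h : Steps M M') : Steps (.letq x M N) (.letq x M' N) :=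
  ReflTransGen.lift (Tm.letq x · N) (fun _ _ => Step.letqL) _ _ h

def Env.Extends (Γ' Γ : Env) : Prop := ∀ ⦃y α⦄, Γ y = some α → Γ' y = some α

theorem Env.Extends.update {Γ' Γ : Env} (h : Γ'.Extends Γ) (x : ℕ) (α : Ty) :
    (Γ'.update x α).Extends (Γ.update x α) := by
  intro y β
  unfold Env.update
  split_ifs
  exacts [id, (h ·)]

theorem Env.extends_empty (Γ : Env) : Γ.Extends Env.empty := fun _ _ h => nomatch h

theorem Types.weaken {Γ Δ Γ' Δ' : Env} {M : Tm} {α : Ty} (h : Types Γ Δ M α)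
    (hΓ : Γ'.Extends Γ) (hΔ : Δ'.Extends Δ) : Types Γ' Δ' M α := by
  induction h generalizing Γ' Δ' with
  | varN h => exact .varN (hΓ h)
  | varM h => exact .varM (hΔ h)
  | cunit => exact .cunit
  | cbool => exact .cbool
  | cint => exact .cint
  | lam _ ih => exact .lam (ih (hΓ.update ..) hΔ)
  | fix _ ih => exact .fix (ih ((hΓ.update ..).update ..) hΔ)
  | app _ _ ih ih' => exact .app (ih hΓ hΔ) (ih' hΓ hΔ)
  | add _ _ ih ih' => exact .add (ih hΓ hΔ) (ih' hΓ hΔ)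
  | ifte _ _ _ ih ih' ih'' => exact .ifte (ih hΓ hΔ) (ih' hΓ hΔ) (ih'' hΓ hΔ)
  | quote _ ih => exact .quote (ih (Env.extends_empty _) hΔ)
  | letq _ _ ih ih' => exact .letq (ih hΓ hΔ) (ih' hΓ (hΔ.update ..))

theorem Closed.types {M : Tm} {α : Ty} (h : Closed M α) (Γ Δ : Env) : Types Γ Δ M α :=
  h.weaken (Env.extends_empty Γ) (Env.extends_empty Δ)

theorem Types.isSome_of_mem_fv {Γ Δ : Env} {M : Tm} {α : Ty} (h : Types Γ Δ M α) :
    ∀ y ∈ fv M, (Γ y).isSome ∨ (Δ y).isSome := by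
  induction h <;> intro y hy <;>
    simp only [fv, Finset.mem_union, Finset.mem_sdiff, Finset.mem_singleton,
      Finset.mem_insert] at hy
  all_goals grind [Env.update, Env.empty]

theorem Closed.fv_eq_empty {M : Tm} {α : Ty} (h : Closed M α) : fv M = ∅ :=
  Finset.eq_empty_of_forall_notMem fun y hy => by simpa [Env.empty] using h.isSome_of_mem_fv y hy

theorem Types.of_plug {M : Tm} (C : Ctx) {Γ Δ : Env} {τ : Ty} (h : Types Γ Δ (C.plug M) τ) :
    ∃ Γ₀ Δ₀ α, Types Γ₀ Δ₀ M α ∧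
      ∀ N, Types Γ₀ Δ₀ N α → Types Γ Δ (C.plug N) τ := by
  induction C generalizing Γ Δ τ with
  | hole => exact ⟨Γ, Δ, τ, h, fun _ => id⟩
  | _ =>
    cases h
    all_goals
      obtain ⟨Γ₀, Δ₀, α, hM, hplug⟩ := ‹∀ {Γ Δ τ}, _ → _› ‹_›
      exact ⟨Γ₀, Δ₀, α, hM, fun N hN => by
        constructor <;> first | exact hplug N hN | assumption⟩

def Ctx.comp : Ctx → Ctx → Ctx
  | .hole, D => D
  | .lamC x α C, D => .lamC x α (C.comp D)
  | .fixC g x α β C, D => .fixC g x α β (C.comp D)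
  | .appL C N, D => .appL (C.comp D) N
  | .appR L C, D => .appR L (C.comp D)
  | .addL C N, D => .addL (C.comp D) N
  | .addR L C, D => .addR L (C.comp D)
  | .ifteC C N N', D => .ifteC (C.comp D) N N'
  | .ifteL L C N', D => .ifteL L (C.comp D) N'
  | .ifteR L N C, D => .ifteR L N (C.comp D)
  | .quoteC C, D => .quoteC (C.comp D)
  | .letqL x C N, D => .letqL x (C.comp D) N
  | .letqR x L C, D => .letqR x L (C.comp D)

@[simp]
theorem Ctx.plug_comp (C D : Ctx) (M : Tm) : (C.comp D).plug M = C.plug (D.plug M) := by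
  induction C <;> simp [Ctx.comp, Ctx.plug, *]

theorem Prec.plug {M N : Tm} (h : Prec M N) (D : Ctx) : Prec (D.plug M) (D.plug N) := by
  intro C
  simpa using h (C.comp D)

inductive CompatJoin : Tm → Tm → Prop
  | var (x) : CompatJoin (.var x) (.var x)
  | cunit : CompatJoin .cunit .cunit
  | cbool (b) : CompatJoin (.cbool b) (.cbool b)
  | cint (n) : CompatJoin (.cint n) (.cint n)
  | lam (x α) {M N} : CompatJoin M N → CompatJoin (.lam x α M) (.lam x α N)
  | fix (g x α β) {M N} : CompatJoin M N → CompatJoin (.fix g x α β M) (.fix g x α β N)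
  | app {M N M' N'} : CompatJoin M M' → CompatJoin N N' → CompatJoin (.app M N) (.app M' N')
  | add {M N M' N'} : CompatJoin M M' → CompatJoin N N' → CompatJoin (.add M N) (.add M' N')
  | ifte {M N K M' N' K'} : CompatJoin M M' → CompatJoin N N' → CompatJoin K K' →
      CompatJoin (.ifte M N K) (.ifte M' N' K')
  | quote {M N} : CompatJoin M N → CompatJoin (.quote M) (.quote N)
  | letq (x) {M N M' N'} : CompatJoin M M' → CompatJoin N N' →
      CompatJoin (.letq x M N) (.letq x M' N')
  /-- Closedness is what makes this case stable under substitution. -/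
  | join {M N} : fv M = ∅ → fv N = ∅ → Join Steps M N → CompatJoin M N

namespace CompatJoin

theorem refl (M : Tm) : CompatJoin M M := by
  induction M <;> constructor <;> assumption

theorem plug (C : Ctx) {M N : Tm} (h : CompatJoin M N) : CompatJoin (C.plug M) (C.plug N) := by
  induction C <;> first | exact h | constructor <;> first | assumption | exact refl _

theorem subst {M N : Tm} (h : CompatJoin M N) (x : ℕ) {A B : Tm} (hAB : CompatJoin A B) :
    CompatJoin (PCFdp.subst x A M) (PCFdp.subst x B N) := by
  induction h with
  | join hM hN hMN =>
    rw [subst_eq_self_of_fv_eq_empty hM, subst_eq_self_of_fv_eq_empty hN]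
    exact join hM hN hMN
  | var y => simp only [PCFdp.subst]; split_ifs; exacts [hAB, var y]
  | _ => simp only [PCFdp.subst]; (try split_ifs) <;> constructor <;> assumption

theorem exists_isValue {V Q : Tm} (h : CompatJoin V Q) (hV : IsValue V) :
    ∃ Q', Steps Q Q' ∧ IsValue Q' ∧ CompatJoin V Q' := by
  cases h
  case join hj =>
    obtain ⟨U, hVU, hQU⟩ := hj
    exact ⟨V, hVU.eq_of_isValue hV ▸ hQU, hV, refl V⟩
  all_goals first
    | exact ⟨_, .refl, by constructor, by constructor <;> assumption⟩
    | cases hV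

theorem lam_inv {x α M Q} (h : CompatJoin (.lam x α M) Q) (hQ : IsValue Q) :
    ∃ M', Q = .lam x α M' ∧ CompatJoin M M' := by
  cases h with
  | lam _ _ h => exact ⟨_, rfl, h⟩
  | join _ _ hj => exact ⟨M, (eq_of_join_of_isValue hj (.lam ..) hQ).symm, refl M⟩

theorem fix_inv {g x α β M Q} (h : CompatJoin (.fix g x α β M) Q) (hQ : IsValue Q) :
    ∃ M', Q = .fix g x α β M' ∧ CompatJoin M M' := by
  cases h with
  | fix _ _ _ _ h => exact ⟨_, rfl, h⟩
  | join _ _ hj => exact ⟨M, (eq_of_join_of_isValue hj (.fix ..) hQ).symm, refl M⟩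

theorem quote_inv {M Q} (h : CompatJoin (.quote M) Q) (hQ : IsValue Q) :
    ∃ M', Q = .quote M' ∧ CompatJoin M M' := by
  cases h with
  | quote h => exact ⟨_, rfl, h⟩
  | join _ _ hj => exact ⟨M, (eq_of_join_of_isValue hj (.quote _) hQ).symm, refl M⟩

theorem steps_of_cbool {b Q} (h : CompatJoin (.cbool b) Q) : Steps Q (.cbool b) := by
  cases h with
  | cbool => exact .refl
  | join _ _ hj =>
    obtain ⟨U, hU, hQU⟩ := hj
    exact hU.eq_of_isValue (.cbool b) ▸ hQU

theorem steps_of_cint {n Q} (h : CompatJoin (.cint n) Q) : Steps Q (.cint n) := by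
  cases h with
  | cint => exact .refl
  | join _ _ hj =>
    obtain ⟨U, hU, hQU⟩ := hj
    exact hU.eq_of_isValue (.cint n) ▸ hQU

def Simulates (P Q : Tm) : Prop := ∀ ⦃P'⦄, Step P P' → ∃ Q', Steps Q Q' ∧ CompatJoin P' Q'

theorem simulates_join {P Q : Tm} (hP : fv P = ∅) (hQ : fv Q = ∅) (h : Join Steps P Q) :
    Simulates P Q := by
  intro P' hPP'
  obtain ⟨Z, hPZ, hQZ⟩ := h
  rcases hPZ.cases_head with rfl | ⟨P'', hstep, hrest⟩
  · exact ⟨P', hQZ.tail hPP', refl P'⟩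
  · obtain rfl := hPP'.deterministic hstep
    exact ⟨_, .refl, join (fv_eq_empty_of_steps hP (.single hPP')) hQ ⟨Z, hrest, hQZ⟩⟩

theorem simulates_app {M N M' N' : Tm} (h₁ : CompatJoin M M') (h₂ : CompatJoin N N')
    (ih₁ : Simulates M M') (ih₂ : Simulates N N') : Simulates (.app M N) (.app M' N') := by
  intro P' hP
  cases hP with
  | beta hV =>
    obtain ⟨_, hs₁, hv₁, hr₁⟩ := h₁.exists_isValue (.lam ..)
    obtain ⟨L', rfl, hL⟩ := hr₁.lam_inv hv₁
    obtain ⟨_, hs₂, hv₂, hr₂⟩ := h₂.exists_isValue hV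
    exact ⟨_, hs₁.appL.trans ((hs₂.appR hv₁).tail (.beta hv₂)), hL.subst _ hr₂⟩
  | betaFix hV =>
    obtain ⟨_, hs₁, hv₁, hr₁⟩ := h₁.exists_isValue (.fix ..)
    obtain ⟨L', rfl, hL⟩ := hr₁.fix_inv hv₁
    obtain ⟨_, hs₂, hv₂, hr₂⟩ := h₂.exists_isValue hV
    exact ⟨_, hs₁.appL.trans ((hs₂.appR hv₁).tail (.betaFix hv₂)),
      (hL.subst _ (.fix _ _ _ _ hL)).subst _ hr₂⟩
  | appL hs =>
    obtain ⟨_, hs₁, hr₁⟩ := ih₁ hs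
    exact ⟨_, hs₁.appL, hr₁.app h₂⟩
  | appR hV hs =>
    obtain ⟨_, hs₁, hv₁, hr₁⟩ := h₁.exists_isValue hV
    obtain ⟨_, hs₂, hr₂⟩ := ih₂ hs
    exact ⟨_, hs₁.appL.trans (hs₂.appR hv₁), hr₁.app hr₂⟩

theorem simulates_add {M N M' N' : Tm} (h₁ : CompatJoin M M') (h₂ : CompatJoin N N')
    (ih₁ : Simulates M M') (ih₂ : Simulates N N') : Simulates (.add M N) (.add M' N') := by
  intro P' hP
  cases hP with
  | addC =>
    exact ⟨_, h₁.steps_of_cint.addL.trans ((h₂.steps_of_cint.addR (.cint _)).tail .addC),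
      refl _⟩
  | addL hs =>
    obtain ⟨_, hs₁, hr₁⟩ := ih₁ hs
    exact ⟨_, hs₁.addL, hr₁.add h₂⟩
  | addR hV hs =>
    obtain ⟨_, hs₁, hv₁, hr₁⟩ := h₁.exists_isValue hV
    obtain ⟨_, hs₂, hr₂⟩ := ih₂ hs
    exact ⟨_, hs₁.addL.trans (hs₂.addR hv₁), hr₁.add hr₂⟩

theorem simulates_ifte {M N K M' N' K' : Tm} (h₁ : CompatJoin M M') (h₂ : CompatJoin N N')
    (h₃ : CompatJoin K K') (ih₁ : Simulates M M') :
    Simulates (.ifte M N K) (.ifte M' N' K') := by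
  intro P' hP
  cases hP with
  | iteT => exact ⟨_, h₁.steps_of_cbool.ifteC.tail .iteT, h₂⟩
  | iteF => exact ⟨_, h₁.steps_of_cbool.ifteC.tail .iteF, h₃⟩
  | ifteC hs =>
    obtain ⟨_, hs₁, hr₁⟩ := ih₁ hs
    exact ⟨_, hs₁.ifteC, hr₁.ifte h₂ h₃⟩

theorem simulates_letq {x : ℕ} {M N M' N' : Tm} (h₁ : CompatJoin M M') (h₂ : CompatJoin N N')
    (ih₁ : Simulates M M') : Simulates (.letq x M N) (.letq x M' N') := by
  intro P' hP
  cases hP with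
  | letqQ =>
    obtain ⟨_, hs₁, hv₁, hr₁⟩ := h₁.exists_isValue (.quote _)
    obtain ⟨A', rfl, hA⟩ := hr₁.quote_inv hv₁
    exact ⟨_, hs₁.letqL.tail .letqQ, h₂.subst x hA⟩
  | letqL hs =>
    obtain ⟨_, hs₁, hr₁⟩ := ih₁ hs
    exact ⟨_, hs₁.letqL, hr₁.letq x h₂⟩

theorem simulates {P Q : Tm} (h : CompatJoin P Q) : Simulates P Q := by
  induction h with
  | join hP hQ hj => exact simulates_join hP hQ hj
  | var | cunit | cbool | cint | lam | fix | quote => intro _ hP; cases hP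
  | app h₁ h₂ ih₁ ih₂ => exact simulates_app h₁ h₂ ih₁ ih₂
  | add h₁ h₂ ih₁ ih₂ => exact simulates_add h₁ h₂ ih₁ ih₂
  | ifte h₁ h₂ h₃ ih₁ => exact simulates_ifte h₁ h₂ h₃ ih₁
  | letq x h₁ h₂ ih₁ => exact simulates_letq h₁ h₂ ih₁

theorem conv {P Q : Tm} (h : CompatJoin P Q) (hP : Conv P) : Conv Q := by
  obtain ⟨V, hPV, hV⟩ := hP
  induction hPV using ReflTransGen.head_induction_on generalizing Q with
  | refl =>
    obtain ⟨Q', hQQ', hQ', -⟩ := h.exists_isValue hV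
    exact ⟨Q', hQQ', hQ'⟩
  | head hstep _ ih =>
    obtain ⟨Q', hQQ', hr⟩ := h.simulates hstep
    obtain ⟨W, hQ'W, hW⟩ := ih hr
    exact ⟨W, hQQ'.trans hQ'W, hW⟩

end CompatJoin

theorem conv_plug_of_join {C : Ctx} {M N : Tm} (hM : fv M = ∅) (hN : fv N = ∅)
    (h : Join Steps M N) (hC : Conv (C.plug M)) : Conv (C.plug N) :=
  ((CompatJoin.join hM hN h).plug C).conv hC

theorem conv_of_conv_app {L N : Tm} (h : Conv (.app L N)) : Conv N := by
  obtain ⟨V, hs, hV⟩ := h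
  generalize hP : Tm.app L N = P at hs
  induction hs using ReflTransGen.head_induction_on generalizing L N with
  | refl => subst hP; cases hV
  | head hstep _ ih =>
    subst hP
    cases hstep with
    | beta hN | betaFix hN => exact ⟨N, .refl, hN⟩
    | appL _ => exact ih rfl
    | appR _ hN =>
      obtain ⟨W, hW, hWv⟩ := ih rfl
      exact ⟨W, .head hN hW, hWv⟩

theorem conv_of_prec_isValue {V M : Tm} {α : Ty} (h : Prec V M) (hV : IsValue V)
    (hVc : Closed V α) (hM : Closed M α) : Conv M := by
  let C : Ctx := .appR (.lam 0 α .cunit) .hole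
  have hCV : Conv (C.plug V) := ⟨.cunit, .single (.beta hV), .cunit⟩
  exact conv_of_conv_app (h C (.app (.lam .cunit) hVc) (.app (.lam .cunit) hM) hCV)

def omega (σ : Ty) : Tm :=
  .app (.fix 0 1 .unit σ (.app (.var 0) (.var 1))) .cunit

theorem closed_omega (σ : Ty) : Closed (omega σ) σ :=
  .app (.fix (.app (.varN rfl) (.varN rfl))) .cunit

/-- Retypes a closed `X : α` at an arbitrary `σ` without changing its value: in `λ0.0` the
variable `0` may be typed as the modal one bound to `⟨omega σ⟩`. -/
def coerce (σ α : Ty) : Ctx :=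
  .letqR 0 (.quote (omega σ)) (.appR (.lam 0 α (.var 0)) .hole)

theorem types_coerce_plug {X : Tm} {α : Ty} (hX : Closed X α) (σ : Ty) (Γ Δ : Env) :
    Types Γ Δ ((coerce σ α).plug X) σ :=
  .letq (.quote ((closed_omega σ).types _ _))
    (.app (.lam (.varM (by simp [Env.update]))) (hX.types _ _))

theorem fv_coerce_plug {X : Tm} (hX : fv X = ∅) (σ α : Ty) :
    fv ((coerce σ α).plug X) = ∅ := by
  simp [coerce, Ctx.plug, fv, omega, hX]

theorem steps_coerce_plug {X X' : Tm} (hX : fv X = ∅) (hXX' : Evals X X') (σ α : Ty) :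
    Steps ((coerce σ α).plug X) X' := by
  have hunq : Step ((coerce σ α).plug X) (.app (.lam 0 α (.var 0)) X) := by
    simpa [coerce, Ctx.plug, subst, subst_eq_self_of_fv_eq_empty hX] using
      Step.letqQ (x := 0) (M := omega σ) (N := .app (.lam 0 α (.var 0)) X)
  have hbeta : Step (.app (.lam 0 α (.var 0)) X') X' := by
    simpa [subst] using Step.beta (x := 0) (α := α) (M := .var 0) hXX'.2
  exact .head hunq ((hXX'.1.appR (.lam ..)).tail hbeta)

theorem Prec.of_evals {M N M' N' : Tm} {α : Ty} (h : Prec M N) (hM : Closed M α)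
    (hN : Closed N α) (hMM' : Evals M M') (hNN' : Evals N N') : Prec M' N' := by
  intro C hCM' _ hconv
  obtain ⟨Γ₀, Δ₀, σ, -, hplug⟩ := Types.of_plug C hCM'
  have hM₀ := hM.fv_eq_empty
  have hN₀ := hN.fv_eq_empty
  have hKM : Conv (C.plug ((coerce σ α).plug M)) :=
    conv_plug_of_join (fv_eq_empty_of_steps hM₀ hMM'.1)
      (fv_coerce_plug hM₀ σ α) ⟨M', .refl, steps_coerce_plug hM₀ hMM' σ α⟩ hconv
  have hKN : Conv (C.plug ((coerce σ α).plug N)) :=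
    h.plug (coerce σ α) C (hplug _ (types_coerce_plug hM σ _ _))
      (hplug _ (types_coerce_plug hN σ _ _)) hKM
  exact conv_plug_of_join (fv_coerce_plug hN₀ σ α)
    (fv_eq_empty_of_steps hN₀ hNN'.1)
    ⟨N', steps_coerce_plug hN₀ hNN' σ α, .refl⟩ hKN

/-- if `M` is closed and `M ≃ V` for a (closed) value `V`, then
`M ⇓ W` for some value `W` with `V ≃ W`. -/
theorem closed_cong_value_evals (M V : Tm) (α : Ty)
    (hM : Closed M α) (hV : IsValue V) (hVc : Closed V α)
    (h : Cong M V) :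
    ∃ W, Evals M W ∧ Cong V W := by
  obtain ⟨W, hMW⟩ := conv_of_prec_isValue h.2 hV hVc hM
  have hVV : Evals V V := ⟨.refl, hV⟩
  exact ⟨W, hMW, h.2.of_evals hVc hM hVV hMW, h.1.of_evals hM hVc hMW hVV⟩

end PCFdp
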